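/- arXiv:2509.12347 — 2 statements merged into one kernel-verified Lean document; each statement's English description precedes it below -/
import Mathlib

section
/- Every finite simple graph G admits a proper vertex coloring using at most ω(G) + μ(Ḡ) colors, where ω(G) is the clique number of G and μ(Ḡ) is the maximum matching size of the complement graph Ḡ. -/
/-- `M` is a matching of the simple graph `G`, given as a finite set of edges of `G`
that are pairwise vertex-disjoint. -/
def IsMatchingFinset {V : Type*} (G : SimpleGraph V) (M : Finset (Sym2 V)) : Prop :=
  (∀ e ∈ M, e ∈ G.edgeSet) ∧
  ∀ e ∈ M, ∀ f ∈ M, e ≠ f → ∀ v : V, ¬(v ∈ e ∧ v ∈ f)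

/-- Every finite simple graph `G` admits a proper vertex coloring using at most
`ω + μ̄` colors, where `ω` is the clique number of `G` and `μ̄` is the maximum
matching size of the complement graph. -/
theorem colorable_cliqueNum_add_complMatching {V : Type*} [Fintype V]
    (G : SimpleGraph V) (ω μ : ℕ)
    (hω₁ : ∃ s : Finset V, G.IsNClique ω s)
    (hω₂ : ∀ (m : ℕ) (s : Finset V), G.IsNClique m s → m ≤ ω)
    (hμ₁ : ∃ M : Finset (Sym2 V), IsMatchingFinset Gᶜ M ∧ M.card = μ)
    (hμ₂ : ∀ M : Finset (Sym2 V), IsMatchingFinset Gᶜ M → M.card ≤ μ) :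
    G.Colorable (ω + μ) := by
  classical
  obtain ⟨M, hM, hMcard⟩ := hμ₁
  -- uncovered vertices
  set U : Finset V := Finset.univ.filter (fun v => ∀ e ∈ M, v ∉ e) with hU
  have hUmem : ∀ v : V, v ∈ U ↔ ∀ e ∈ M, v ∉ e := by
    intro v; simp [hU]
  -- U is a clique in G
  have hclique : G.IsClique (U : Set V) := by
    intro u hu v hv huv
    by_contra hadj
    have hcadj : Gᶜ.Adj u v := ⟨huv, hadj⟩
    set e₀ : Sym2 V := s(u, v) with he₀
    have he₀M : e₀ ∉ M := by
      intro h
      exact (hUmem u).1 hu e₀ h (by simp [he₀])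
    have hmatch : IsMatchingFinset Gᶜ (insert e₀ M) := by
      constructor
      · intro e he
        rcases Finset.mem_insert.1 he with rfl | he
        · exact hcadj
        · exact hM.1 e he
      · intro e he f hf hef w hw
        rcases Finset.mem_insert.1 he with rfl | he' <;>
          rcases Finset.mem_insert.1 hf with rfl | hf'
        · exact hef rfl
        · have : w = u ∨ w = v := by
            simpa [he₀] using hw.1
          rcases this with rfl | rfl
          · exact (hUmem w).1 hu f hf' hw.2
          · exact (hUmem w).1 hv f hf' hw.2
        · have : w = u ∨ w = v := by
            simpa [he₀] using hw.2
          rcases this with rfl | rfl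
          · exact (hUmem w).1 hu e he' hw.1
          · exact (hUmem w).1 hv e he' hw.1
        · exact hM.2 e he' f hf' hef w hw
    have := hμ₂ _ hmatch
    rw [Finset.card_insert_of_notMem he₀M, hMcard] at this
    omega
  have hUcard : U.card ≤ ω := hω₂ U.card U ⟨hclique, rfl⟩
  -- for covered vertices, pick the covering edge
  have hcov : ∀ v : V, v ∉ U → ∃ e, e ∈ M ∧ v ∈ e := by
    intro v hv
    by_contra h
    push_neg at h
    exact hv ((hUmem v).2 fun e he => h e he)
  -- define the coloring into ↥U ⊕ ↥M
  let c : V → (↥U ⊕ ↥M) := fun v =>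
    if h : v ∈ U then Sum.inl ⟨v, h⟩
    else Sum.inr ⟨(hcov v h).choose, (hcov v h).choose_spec.1⟩
  have hvalid : ∀ {u v : V}, G.Adj u v → c u ≠ c v := by
    intro u v hadj hcv
    have hne : u ≠ v := hadj.ne
    by_cases hu : u ∈ U <;> by_cases hv : v ∈ U <;> simp [c, hu, hv] at hcv
    · exact hne hcv
    · -- both covered by the same edge
      obtain ⟨heu, hue⟩ := (hcov u hu).choose_spec
      obtain ⟨hev, hve⟩ := (hcov v hv).choose_spec
      rw [hcv] at hue
      have : (hcov v hv).choose = s(u, v) :=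
        (Sym2.mem_and_mem_iff hne).1 ⟨hue, hve⟩
      have hedge := hM.1 _ hev
      rw [this] at hedge
      rw [SimpleGraph.mem_edgeSet] at hedge
      exact hedge.2 hadj
  have C : G.Coloring (↥U ⊕ ↥M) := SimpleGraph.Coloring.mk c fun h => hvalid h
  have hcol : G.Colorable (Fintype.card (↥U ⊕ ↥M)) := C.colorable
  refine hcol.mono ?_
  simp only [Fintype.card_sum, Fintype.card_coe]
  omega
end

section
/- In the graph G̃ constructed in the W[1]-hardness reduction, G̃ contains a clique cover of size k(n−1) + 2 if and only if the original k-partite graph G contains a clique with exactly one vertex from each part V₁, …, V_k. -/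
/-- Vertices of the graph `G̃` of the hardness reduction: the original vertices
`v_{ij}` (`i ∈ [k]`, `j ∈ [n]`), the clique vertices `u₁,…,u_{k+2}`, and the
path vertices `w_{ij}` (`i ∈ [k]`, `j ∈ [n-1]`). -/
abbrev TildeVert (k n : ℕ) := (Fin k × Fin n) ⊕ (Fin (k + 2) ⊕ (Fin k × Fin (n - 1)))

/-- The original vertex `v_{ij}`. -/
abbrev vVert {k n : ℕ} (i : Fin k) (j : Fin n) : TildeVert k n := Sum.inl (i, j)

/-- The clique vertex `u_i`. -/
abbrev uVert {k n : ℕ} (i : Fin (k + 2)) : TildeVert k n := Sum.inr (Sum.inl i)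

/-- The path vertex `w_{ij}`. -/
abbrev wVert {k n : ℕ} (i : Fin k) (j : Fin (n - 1)) : TildeVert k n := Sum.inr (Sum.inr (i, j))

/-- The index `j`, viewed in `Fin n`. -/
abbrev wLeft {n : ℕ} (j : Fin (n - 1)) : Fin n := ⟨j.val, by omega⟩

/-- The index `j + 1`, viewed in `Fin n`. -/
abbrev wRight {n : ℕ} (j : Fin (n - 1)) : Fin n := ⟨j.val + 1, by omega⟩

/-- The graph `G̃` of the hardness reduction: `G` together with a clique on
`u₁,…,u_{k+2}`, edges `u_i v_{i1}` for `i ∈ [k]`, and vertices `w_{ij}` adjacent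
exactly to `v_{ij}` and `v_{i(j+1)}`. -/
def tildeGraph (k n : ℕ) (G : SimpleGraph (Fin k × Fin n)) : SimpleGraph (TildeVert k n) :=
  SimpleGraph.fromRel (fun x y =>
    match x, y with
    | Sum.inl a, Sum.inl b => G.Adj a b
    | Sum.inr (Sum.inl _), Sum.inr (Sum.inl _) => True
    | Sum.inr (Sum.inl u), Sum.inl (i, j) => u.val = i.val ∧ j.val = 0
    | Sum.inl (i, j), Sum.inr (Sum.inr (i', j')) =>
        i.val = i'.val ∧ (j.val = j'.val ∨ j.val = j'.val + 1)
    | _, _ => False)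

/-- `P` is a clique cover of `G`: a partition of the vertex set into nonempty cliques. -/
def IsCliqueCover {V : Type*} (G : SimpleGraph V) (P : Finset (Finset V)) : Prop :=
  (∀ c ∈ P, G.IsClique (c : Set V)) ∧ (∀ c ∈ P, c.Nonempty) ∧
  ∀ v : V, ∃! c, c ∈ P ∧ v ∈ c

namespace TildeAux
variable {k n : ℕ} {G : SimpleGraph (Fin k × Fin n)}

lemma tadj_vv {a b : Fin k × Fin n} :
    (tildeGraph k n G).Adj (Sum.inl a) (Sum.inl b) ↔ G.Adj a b := by
  simp only [tildeGraph, SimpleGraph.fromRel_adj, ne_eq, Sum.inl.injEq]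
  constructor
  · rintro ⟨h1, h2 | h2⟩ <;> [exact h2; exact h2.symm]
  · exact fun h => ⟨fun e => G.irrefl (e ▸ h), Or.inl h⟩

lemma tadj_uu {a b : Fin (k+2)} (h : a ≠ b) :
    (tildeGraph k n G).Adj (uVert a) (uVert b) := by
  simp [tildeGraph, SimpleGraph.fromRel_adj, h]

lemma tadj_vw {i : Fin k} {j : Fin n} {i' : Fin k} {j' : Fin (n-1)} :
    (tildeGraph k n G).Adj (vVert i j) (wVert i' j') ↔
      (i.val = i'.val ∧ (j.val = j'.val ∨ j.val = j'.val + 1)) := by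
  simp [tildeGraph, SimpleGraph.fromRel_adj]

lemma not_tadj_ww {i i' : Fin k} {j j' : Fin (n-1)} :
    ¬ (tildeGraph k n G).Adj (wVert i j) (wVert i' j') := by
  simp [tildeGraph, SimpleGraph.fromRel_adj]

lemma not_tadj_uw {a : Fin (k+2)} {i : Fin k} {j : Fin (n-1)} :
    ¬ (tildeGraph k n G).Adj (uVert a) (wVert i j) := by
  simp [tildeGraph, SimpleGraph.fromRel_adj]

lemma tadj_uv {a : Fin (k+2)} {i : Fin k} {j : Fin n} :
    (tildeGraph k n G).Adj (uVert a) (vVert i j) ↔ (a.val = i.val ∧ j.val = 0) := by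
  simp [tildeGraph, SimpleGraph.fromRel_adj]

end TildeAux

open TildeAux Finset in
lemma backward (k n : ℕ) (hn : 0 < n) (G : SimpleGraph (Fin k × Fin n))
    (f : Fin k → Fin n) (hf : ∀ i i' : Fin k, i ≠ i' → G.Adj (i, f i) (i', f i')) :
    ∃ P : Finset (Finset (TildeVert k n)),
      IsCliqueCover (tildeGraph k n G) P ∧ P.card = k * (n - 1) + 2 := by
  rcases Nat.eq_zero_or_pos k with rfl | hk
  · -- k = 0 : only the two u-vertices exist
    refine ⟨{{uVert 0}, {uVert 1}}, ⟨?_, ?_, ?_⟩, ?_⟩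
    · intro c hc
      simp only [Finset.mem_insert, Finset.mem_singleton] at hc
      rcases hc with rfl | rfl <;> simp [SimpleGraph.isClique_singleton]
    · intro c hc
      simp only [Finset.mem_insert, Finset.mem_singleton] at hc
      rcases hc with rfl | rfl <;> simp
    · rintro (⟨⟨i, j⟩⟩ | a | ⟨⟨i, j⟩⟩)
      · exact absurd i.2 (by omega)
      · rcases a with ⟨a, ha⟩
        interval_cases a
        · refine ⟨{uVert 0}, ⟨by simp, by simp⟩, ?_⟩
          rintro c ⟨hc, hm⟩
          simp only [Finset.mem_insert, Finset.mem_singleton] at hc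
          rcases hc with rfl | rfl
          · rfl
          · simp only [Finset.mem_singleton] at hm
            exact absurd hm (by simp [Fin.ext_iff])
        · refine ⟨{uVert 1}, ⟨by simp, by simp⟩, ?_⟩
          rintro c ⟨hc, hm⟩
          simp only [Finset.mem_insert, Finset.mem_singleton] at hc
          rcases hc with rfl | rfl
          · simp only [Finset.mem_singleton] at hm
            exact absurd hm (by simp [Fin.ext_iff])
          · rfl
      · exact absurd i.2 (by omega)
    · rw [Finset.card_insert_of_notMem (by simp [Fin.ext_iff]), Finset.card_singleton]
      simp
  · -- k ≥ 1
    set U : Finset (TildeVert k n) := Finset.univ.image uVert with hU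
    set Vf : Finset (TildeVert k n) := Finset.univ.image (fun i : Fin k => vVert i (f i)) with hVf
    set pr : Fin k × Fin (n-1) → Finset (TildeVert k n) := fun p =>
      if p.2.val < (f p.1).val then {vVert p.1 (wLeft p.2), wVert p.1 p.2}
      else {wVert p.1 p.2, vVert p.1 (wRight p.2)} with hpr
    -- membership characterizations
    have hw_pr : ∀ (i : Fin k) (j : Fin (n-1)) (p : Fin k × Fin (n-1)),
        wVert i j ∈ pr p ↔ p = (i, j) := by
      intro i j p
      simp only [hpr]
      split_ifs with h <;>
        simp [Finset.mem_insert, Prod.ext_iff, eq_comm, and_comm]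
    have hv_pr : ∀ (i : Fin k) (j : Fin n) (p : Fin k × Fin (n-1)),
        vVert i j ∈ pr p ↔ p.1 = i ∧
          ((p.2.val < (f i).val ∧ j.val = p.2.val) ∨
           ((f p.1).val ≤ p.2.val ∧ j.val = p.2.val + 1)) := by
      intro i j p
      simp only [hpr]
      split_ifs with h
      · simp only [Finset.mem_insert, Finset.mem_singleton]
        constructor
        · rintro (he | he)
          · rw [Sum.inl.injEq, Prod.mk.injEq] at he
            obtain ⟨h1, h2⟩ := he
            refine ⟨h1.symm, Or.inl ⟨?_, ?_⟩⟩
            · rw [h1]; exact h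
            · exact Fin.ext_iff.mp h2
          · exact absurd he (by simp)
        · rintro ⟨rfl, ⟨h1, h2⟩ | ⟨h1, h2⟩⟩
          · left
            rw [Sum.inl.injEq, Prod.mk.injEq]
            exact ⟨rfl, Fin.ext (by simpa using h2)⟩
          · omega
      · simp only [Finset.mem_insert, Finset.mem_singleton]
        constructor
        · rintro (he | he)
          · exact absurd he (by simp)
          · rw [Sum.inl.injEq, Prod.mk.injEq] at he
            obtain ⟨h1, h2⟩ := he
            refine ⟨h1.symm, Or.inr ⟨?_, ?_⟩⟩
            · omega
            · exact Fin.ext_iff.mp h2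
        · rintro ⟨rfl, ⟨h1, h2⟩ | ⟨h1, h2⟩⟩
          · omega
          · right
            rw [Sum.inl.injEq, Prod.mk.injEq]
            exact ⟨rfl, Fin.ext (by simpa using h2)⟩
    have hu_pr : ∀ (a : Fin (k+2)) (p : Fin k × Fin (n-1)), uVert a ∉ pr p := by
      intro a p
      simp only [hpr]
      split_ifs with h <;> simp
    have hw_self : ∀ (i : Fin k) (j : Fin (n-1)), wVert i j ∈ pr (i, j) := by
      intro i j
      rw [hw_pr]
    set P : Finset (Finset (TildeVert k n)) :=
      insert U (insert Vf (Finset.univ.image pr)) with hPdef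
    have hmemP : ∀ c, c ∈ P ↔ c = U ∨ c = Vf ∨ ∃ p, pr p = c := by
      intro c
      simp [hPdef, Finset.mem_insert, Finset.mem_image]
    have hUmem : ∀ x : TildeVert k n, x ∈ U ↔ ∃ a, uVert a = x := by
      intro x; simp [hU]
    have hVfmem : ∀ x : TildeVert k n, x ∈ Vf ↔ ∃ i, vVert i (f i) = x := by
      intro x; simp [hVf]
    -- cliques
    have hcliques : ∀ c ∈ P, (tildeGraph k n G).IsClique (c : Set (TildeVert k n)) := by
      intro c hc
      rw [hmemP] at hc
      rcases hc with rfl | rfl | ⟨p, rfl⟩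
      · intro x hx y hy hxy
        obtain ⟨a, rfl⟩ := (hUmem x).mp (Finset.mem_coe.mp hx)
        obtain ⟨b, rfl⟩ := (hUmem y).mp (Finset.mem_coe.mp hy)
        exact tadj_uu (fun h => hxy (by rw [h]))
      · intro x hx y hy hxy
        obtain ⟨a, rfl⟩ := (hVfmem x).mp (Finset.mem_coe.mp hx)
        obtain ⟨b, rfl⟩ := (hVfmem y).mp (Finset.mem_coe.mp hy)
        have hab : a ≠ b := fun h => hxy (by rw [h])
        exact tadj_vv.mpr (hf a b hab)
      · intro x hx y hy hxy
        rw [Finset.mem_coe] at hx hy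
        simp only [hpr] at hx hy
        split_ifs at hx hy with h
        · simp only [Finset.mem_insert, Finset.mem_singleton] at hx hy
          rcases hx with rfl | rfl <;> rcases hy with rfl | rfl
          · exact absurd rfl hxy
          · exact tadj_vw.mpr ⟨rfl, Or.inl rfl⟩
          · exact (tadj_vw.mpr ⟨rfl, Or.inl rfl⟩).symm
          · exact absurd rfl hxy
        · simp only [Finset.mem_insert, Finset.mem_singleton] at hx hy
          rcases hx with rfl | rfl <;> rcases hy with rfl | rfl
          · exact absurd rfl hxy
          · exact (tadj_vw.mpr ⟨rfl, Or.inr rfl⟩).symm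
          · exact tadj_vw.mpr ⟨rfl, Or.inr rfl⟩
          · exact absurd rfl hxy
    -- nonempty
    have hnonempty : ∀ c ∈ P, c.Nonempty := by
      intro c hc
      rw [hmemP] at hc
      rcases hc with rfl | rfl | ⟨p, rfl⟩
      · exact ⟨uVert 0, (hUmem _).mpr ⟨0, rfl⟩⟩
      · exact ⟨vVert ⟨0, hk⟩ (f ⟨0, hk⟩), (hVfmem _).mpr ⟨⟨0, hk⟩, rfl⟩⟩
      · exact ⟨wVert p.1 p.2, hw_self p.1 p.2⟩
    -- cover
    have hUP : U ∈ P := (hmemP U).mpr (Or.inl rfl)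
    have hVfP : Vf ∈ P := (hmemP Vf).mpr (Or.inr (Or.inl rfl))
    have hprP : ∀ p, pr p ∈ P := fun p => (hmemP _).mpr (Or.inr (Or.inr ⟨p, rfl⟩))
    have hcover : ∀ v : TildeVert k n, ∃! c, c ∈ P ∧ v ∈ c := by
      rintro (⟨i, j⟩ | a | ⟨i, j⟩)
      · -- v-vertex
        rcases lt_trichotomy j.val (f i).val with hj | hj | hj
        · -- j < f i : covered by pr (i, j)
          have hjlt : j.val < n - 1 := by have := (f i).isLt; omega
          refine ⟨pr (i, ⟨j.val, hjlt⟩), ⟨hprP _, ?_⟩, ?_⟩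
          · exact (hv_pr i j _).mpr ⟨rfl, Or.inl ⟨hj, rfl⟩⟩
          · rintro c ⟨hc, hm⟩
            rw [hmemP] at hc
            rcases hc with rfl | rfl | ⟨q, rfl⟩
            · obtain ⟨b, hb⟩ := (hUmem _).mp hm
              exact absurd hb (by simp)
            · obtain ⟨i', hi'⟩ := (hVfmem _).mp hm
              rw [Sum.inl.injEq, Prod.mk.injEq] at hi'
              obtain ⟨rfl, hfi⟩ := hi'
              rw [Fin.ext_iff] at hfi
              omega
            · obtain ⟨h1, h2⟩ := (hv_pr i j q).mp hm
              rcases h2 with ⟨h2, h3⟩ | ⟨h2, h3⟩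
              · congr 1
                exact Prod.ext h1 (Fin.ext h3.symm)
              · rw [h1] at h2
                omega
        · -- j = f i : covered by Vf
          have hjf : f i = j := Fin.ext hj.symm
          refine ⟨Vf, ⟨hVfP, (hVfmem _).mpr ⟨i, by rw [hjf]⟩⟩, ?_⟩
          rintro c ⟨hc, hm⟩
          rw [hmemP] at hc
          rcases hc with rfl | rfl | ⟨q, rfl⟩
          · obtain ⟨b, hb⟩ := (hUmem _).mp hm
            exact absurd hb (by simp)
          · rfl
          · obtain ⟨h1, h2⟩ := (hv_pr i j q).mp hm
            rw [h1] at h2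
            omega
        · -- f i < j : covered by pr (i, j - 1)
          have hjlt : j.val - 1 < n - 1 := by have := j.isLt; omega
          refine ⟨pr (i, ⟨j.val - 1, hjlt⟩), ⟨hprP _, ?_⟩, ?_⟩
          · exact (hv_pr i j _).mpr ⟨rfl, Or.inr ⟨by show (f i).val ≤ j.val - 1; omega,
              by show j.val = (j.val - 1) + 1; omega⟩⟩
          · rintro c ⟨hc, hm⟩
            rw [hmemP] at hc
            rcases hc with rfl | rfl | ⟨q, rfl⟩
            · obtain ⟨b, hb⟩ := (hUmem _).mp hm
              exact absurd hb (by simp)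
            · obtain ⟨i', hi'⟩ := (hVfmem _).mp hm
              rw [Sum.inl.injEq, Prod.mk.injEq] at hi'
              obtain ⟨rfl, hfi⟩ := hi'
              rw [Fin.ext_iff] at hfi
              omega
            · obtain ⟨h1, h2⟩ := (hv_pr i j q).mp hm
              rcases h2 with ⟨h2, h3⟩ | ⟨h2, h3⟩
              · omega
              · congr 1
                refine Prod.ext h1 (Fin.ext ?_)
                show q.2.val = j.val - 1
                omega
      · -- u-vertex
        refine ⟨U, ⟨hUP, (hUmem _).mpr ⟨a, rfl⟩⟩, ?_⟩
        rintro c ⟨hc, hm⟩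
        rw [hmemP] at hc
        rcases hc with rfl | rfl | ⟨q, rfl⟩
        · rfl
        · obtain ⟨i', hi'⟩ := (hVfmem _).mp hm
          exact absurd hi' (by simp)
        · exact absurd hm (hu_pr a q)
      · -- w-vertex
        refine ⟨pr (i, j), ⟨hprP _, hw_self i j⟩, ?_⟩
        rintro c ⟨hc, hm⟩
        rw [hmemP] at hc
        rcases hc with rfl | rfl | ⟨q, rfl⟩
        · obtain ⟨b, hb⟩ := (hUmem _).mp hm
          exact absurd hb (by simp)
        · obtain ⟨i', hi'⟩ := (hVfmem _).mp hm
          exact absurd hi' (by simp)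
        · rw [(hw_pr i j q).mp hm]
    -- cardinality
    have hprinj : Function.Injective pr := by
      intro p q h
      have h2 : wVert p.1 p.2 ∈ pr q := h ▸ hw_self p.1 p.2
      exact ((hw_pr p.1 p.2 q).mp h2).symm
    have himcard : (Finset.univ.image pr).card = k * (n - 1) := by
      rw [Finset.card_image_of_injective _ hprinj]
      simp
    have hVfnot : Vf ∉ Finset.univ.image pr := by
      intro h
      obtain ⟨p, -, hp⟩ := Finset.mem_image.mp h
      have : wVert p.1 p.2 ∈ Vf := hp ▸ hw_self p.1 p.2
      obtain ⟨i', hi'⟩ := (hVfmem _).mp this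
      exact absurd hi' (by simp)
    have hUnot : U ∉ insert Vf (Finset.univ.image pr) := by
      intro h
      rw [Finset.mem_insert] at h
      rcases h with h | h
      · have : uVert 0 ∈ Vf := h ▸ (hUmem _).mpr ⟨0, rfl⟩
        obtain ⟨i', hi'⟩ := (hVfmem _).mp this
        exact absurd hi' (by simp)
      · obtain ⟨p, -, hp⟩ := Finset.mem_image.mp h
        have : uVert 0 ∈ pr p := hp ▸ (hUmem _).mpr ⟨0, rfl⟩
        exact hu_pr 0 p this
    refine ⟨P, ⟨hcliques, hnonempty, hcover⟩, ?_⟩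
    rw [hPdef, Finset.card_insert_of_notMem hUnot,
      Finset.card_insert_of_notMem hVfnot, himcard]

open TildeAux Finset in
lemma forward (k n : ℕ) (hn : 0 < n) (G : SimpleGraph (Fin k × Fin n))
    (hpartite : ∀ (i : Fin k) (j j' : Fin n), ¬G.Adj (i, j) (i, j'))
    (P : Finset (Finset (TildeVert k n)))
    (hP : IsCliqueCover (tildeGraph k n G) P) (hcard : P.card = k * (n - 1) + 2) :
    ∃ f : Fin k → Fin n, ∀ i i' : Fin k, i ≠ i' → G.Adj (i, f i) (i', f i') := by
  obtain ⟨hclique, hnon, hcov⟩ := hP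
  have hcov' : ∀ v : TildeVert k n, ∃ c, c ∈ P ∧ v ∈ c ∧ ∀ c' ∈ P, v ∈ c' → c' = c := by
    intro v
    obtain ⟨c, ⟨h1, h2⟩, hu⟩ := hcov v
    exact ⟨c, h1, h2, fun c' hc1 hc2 => hu c' ⟨hc1, hc2⟩⟩
  choose co hcoP hcomem hcouniq using hcov'
  have hadj : ∀ c ∈ P, ∀ x ∈ c, ∀ y ∈ c, x ≠ y → (tildeGraph k n G).Adj x y :=
    fun c hc x hx y hy hxy => hclique c hc (Finset.mem_coe.mpr hx) (Finset.mem_coe.mpr hy) hxy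
  set uK : Fin (k+2) := ⟨k, by omega⟩ with huK
  set cu := co (uVert uK) with hcu
  set S := Finset.image (fun p : Fin k × Fin (n-1) => co (wVert p.1 p.2)) Finset.univ with hS
  -- injectivity of w-cliques
  have hwinj : Function.Injective (fun p : Fin k × Fin (n-1) => co (wVert p.1 p.2)) := by
    intro p q hpq
    by_contra hne
    have hpq' : co (wVert p.1 p.2) = co (wVert q.1 q.2) := hpq
    have h1 : wVert p.1 p.2 ∈ co (wVert q.1 q.2) := hpq' ▸ hcomem (wVert p.1 p.2)
    have h2 : wVert q.1 q.2 ∈ co (wVert q.1 q.2) := hcomem _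
    have hne' : (wVert p.1 p.2 : TildeVert k n) ≠ wVert q.1 q.2 := by
      simp only [ne_eq, Sum.inr.injEq, Prod.mk.injEq]
      intro h
      exact hne (Prod.ext h.1 h.2)
    exact not_tadj_ww (hadj _ (hcoP _) _ h1 _ h2 hne')
  have hScard : S.card = k * (n - 1) := by
    rw [hS, Finset.card_image_of_injective _ hwinj]
    simp
  have hcuS : cu ∉ S := by
    intro hmem
    rw [hS, Finset.mem_image] at hmem
    obtain ⟨p, -, hp⟩ := hmem
    have h1 : wVert p.1 p.2 ∈ cu := hp ▸ hcomem _
    have h2 : uVert uK ∈ cu := hcomem _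
    exact not_tadj_uw (hadj _ (hp ▸ hcoP _) _ h2 _ h1 (by simp))
  set T := insert cu S with hT
  have hTcard : T.card = k * (n-1) + 1 := by
    rw [hT, Finset.card_insert_of_notMem hcuS, hScard]
  have hTP : T ⊆ P := by
    intro c hc
    rw [hT, Finset.mem_insert] at hc
    rcases hc with rfl | hc
    · exact hcoP _
    · rw [hS, Finset.mem_image] at hc
      obtain ⟨p, -, rfl⟩ := hc
      exact hcoP _
  have hPT : (P \ T).card = 1 := by
    rw [Finset.card_sdiff_of_subset hTP, hTcard, hcard]
    omega
  obtain ⟨C, hC⟩ := Finset.card_eq_one.mp hPT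
  have hCP : C ∈ P := (Finset.mem_sdiff.mp (hC ▸ Finset.mem_singleton_self C)).1
  have hmemT : ∀ c ∈ P, c ≠ C → c ∈ T := by
    intro c hc hne
    by_contra h
    exact hne (Finset.mem_singleton.mp (hC ▸ Finset.mem_sdiff.mpr ⟨hc, h⟩))
  -- the set of v-vertices in C
  set A := Finset.univ.filter (fun p : Fin k × Fin n => Sum.inl p ∈ C) with hA
  set B := Finset.univ.filter (fun p : Fin k × Fin n => Sum.inl p ∉ C) with hB
  -- every v-vertex not in C lies in a w-clique
  have hBS : ∀ p ∈ B, co (Sum.inl p) ∈ S := by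
    intro p hp
    rw [hB, Finset.mem_filter] at hp
    have h1 : co (Sum.inl p) ≠ C := fun h => hp.2 (h ▸ hcomem _)
    have h2 : co (Sum.inl p) ∈ T := hmemT _ (hcoP _) h1
    rw [hT, Finset.mem_insert] at h2
    rcases h2 with h2 | h2
    · exfalso
      have hu : uVert uK ∈ co (Sum.inl p) := h2 ▸ hcomem _
      have hv : (Sum.inl p : TildeVert k n) ∈ co (Sum.inl p) := hcomem _
      have := hadj _ (hcoP _) _ hu _ hv (by simp)
      rw [show (Sum.inl p : TildeVert k n) = vVert p.1 p.2 from rfl, tadj_uv] at this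
      have := this.1
      simp only [huK] at this
      omega
    · exact h2
  have hBinj : Set.InjOn (fun p : Fin k × Fin n => co (Sum.inl p)) B := by
    intro p hp q hq hpq
    by_contra hne
    simp only at hpq
    obtain ⟨r, -, hr⟩ := Finset.mem_image.mp (hBS p hp)
    have hw : wVert r.1 r.2 ∈ co (Sum.inl p) := hr ▸ hcomem _
    have hvp : (Sum.inl p : TildeVert k n) ∈ co (Sum.inl p) := hcomem _
    have hvq : (Sum.inl q : TildeVert k n) ∈ co (Sum.inl p) := hpq ▸ hcomem _
    have hap := hadj _ (hcoP (Sum.inl p)) _ hvp _ hw (by simp)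
    have haq := hadj _ (hcoP (Sum.inl p)) _ hvq _ hw (by simp)
    rw [show (Sum.inl p : TildeVert k n) = vVert p.1 p.2 from rfl, tadj_vw] at hap
    rw [show (Sum.inl q : TildeVert k n) = vVert q.1 q.2 from rfl, tadj_vw] at haq
    have hfst : p.1 = q.1 := Fin.ext (hap.1.trans haq.1.symm)
    have hsnd : p.2 ≠ q.2 := fun h => hne (Prod.ext hfst h)
    have hadjpq := hadj _ (hcoP (Sum.inl p)) _ hvp _ hvq
      (by simp only [ne_eq, Sum.inl.injEq]; exact fun h => hne h)
    rw [tadj_vv] at hadjpq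
    rw [show p = (p.1, p.2) from rfl, show q = (q.1, q.2) from rfl, ← hfst] at hadjpq
    exact hpartite _ _ _ hadjpq
  have hBcard : B.card ≤ k * (n - 1) := by
    calc B.card ≤ S.card := Finset.card_le_card_of_injOn _ (fun p hp => hBS p hp) hBinj
    _ = k * (n-1) := hScard
  have hABcard : A.card + B.card = k * n := by
    rw [hA, hB, Finset.card_filter_add_card_filter_not]
    simp
  have harith : k * (n - 1) + k = k * n := by
    cases n with
    | zero => omega
    | succ m => simp [Nat.mul_succ]
  have hAk : k ≤ A.card := by omega
  have hAinj : Set.InjOn (fun p : Fin k × Fin n => p.1) A := by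
    intro p hp q hq hpq
    by_contra hne
    simp only at hpq
    have hp2 := (Finset.mem_filter.mp (Finset.mem_coe.mp hp)).2
    have hq2 := (Finset.mem_filter.mp (Finset.mem_coe.mp hq)).2
    have hadjpq := hadj _ hCP _ hp2 _ hq2
      (by simp only [ne_eq, Sum.inl.injEq]; exact fun h => hne h)
    rw [tadj_vv] at hadjpq
    rw [show p = (p.1, p.2) from rfl, show q = (q.1, q.2) from rfl, hpq] at hadjpq
    exact hpartite _ _ _ hadjpq
  have hAcard : A.card ≤ k := by
    calc A.card ≤ (Finset.univ : Finset (Fin k)).card :=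
      Finset.card_le_card_of_injOn _ (fun p _ => Finset.mem_univ _) hAinj
    _ = k := by simp
  have hsurj : ∀ i : Fin k, ∃ p : Fin k × Fin n, p ∈ A ∧ p.1 = i := by
    have := Finset.surj_on_of_inj_on_of_card_le (s := A) (t := (Finset.univ : Finset (Fin k)))
      (fun p _ => p.1) (fun p _ => Finset.mem_univ _)
      (fun p q hp hq h => hAinj hp hq h) (by simpa using hAk)
    intro i
    obtain ⟨p, hp, hpi⟩ := this i (Finset.mem_univ i)
    exact ⟨p, hp, hpi.symm⟩
  choose pf hpfA hpffst using hsurj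
  refine ⟨fun i => (pf i).2, fun i i' hne => ?_⟩
  have h1 : Sum.inl (pf i) ∈ C := (Finset.mem_filter.mp (hpfA i)).2
  have h2 : Sum.inl (pf i') ∈ C := (Finset.mem_filter.mp (hpfA i')).2
  have hnep : pf i ≠ pf i' := fun h => hne ((hpffst i).symm.trans (h ▸ hpffst i'))
  have := hadj _ hCP _ h1 _ h2 (by simpa using hnep)
  rw [tadj_vv] at this
  have e1 : (i, (pf i).2) = pf i := Prod.ext (hpffst i).symm rfl
  have e2 : (i', (pf i').2) = pf i' := Prod.ext (hpffst i').symm rfl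
  rw [e1, e2]
  exact this

/-- The graph `G̃` of the hardness reduction has a clique cover of size `k(n-1)+2`
iff the `k`-partite graph `G` has a clique with one vertex from each part. -/
theorem tildeGraph_cliqueCover_iff_coloredClique (k n : ℕ) (hn : 0 < n)
    (G : SimpleGraph (Fin k × Fin n))
    (hpartite : ∀ (i : Fin k) (j j' : Fin n), ¬G.Adj (i, j) (i, j')) :
    (∃ P : Finset (Finset (TildeVert k n)),
        IsCliqueCover (tildeGraph k n G) P ∧ P.card = k * (n - 1) + 2) ↔
    (∃ f : Fin k → Fin n, ∀ i i' : Fin k, i ≠ i' → G.Adj (i, f i) (i', f i')) := by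
  constructor
  · rintro ⟨P, hP, hcard⟩
    exact forward k n hn G hpartite P hP hcard
  · rintro ⟨f, hf⟩
    exact backward k n hn G f hf
end
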